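/- Let A be a finite nonempty set of acts and let S ⊆ A be a nonempty subset with |S| = k and S ≠ A. Then there exists a subset T ⊆ A with |T| = k such that T ∩ D_M(A) ≠ ∅ and MmL(T,A) ≤ MmL(S,A). -/

import Mathlib

open Finset

/-- Upper expectation of `f` with respect to the set `P` of probability mass functions:
`Ē(f) = sup_{p ∈ P} ∑ ω, p ω * f ω` (the sup is attained when `P` is nonempty and compact). -/
noncomputable def upperExp {Ω : Type*} [Fintype Ω] (P : Set (Ω → ℝ)) (f : Ω → ℝ) : ℝ :=
  sSup ((fun p => ∑ ω, p ω * f ω) '' P)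

/-- `P` is a credal set: a nonempty compact set of probability mass functions on `Ω`. -/
def IsCredal {Ω : Type*} [Fintype Ω] (P : Set (Ω → ℝ)) : Prop :=
  P.Nonempty ∧ IsCompact P ∧ ∀ p ∈ P, (∀ ω, 0 ≤ p ω) ∧ ∑ ω, p ω = 1

/-- `a ≻ a'`: act `a` dominates act `a'`, i.e. `Ē(a' − a) < 0` (equivalently `E̲(a − a') > 0`). -/
def dominates {Ω : Type*} [Fintype Ω] (P : Set (Ω → ℝ)) (a a' : Ω → ℝ) : Prop :=
  upperExp P (a' - a) < 0

/-- `a` is a maximal act of `A`: `a ∈ A` and no `a' ∈ A` dominates `a`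
(membership in `D_M(A)`). -/
def maximalIn {Ω : Type*} [Fintype Ω] (P : Set (Ω → ℝ)) (A : Finset (Ω → ℝ))
    (a : Ω → ℝ) : Prop :=
  a ∈ A ∧ ∀ a' ∈ A, ¬ dominates P a' a

/-- `mML(S, A) = min_{a ∈ S} max_{a' ∈ A ∖ S} Ē(a' − a)`, valued in `EReal` so that the
maximum over the empty set is `−∞` (hence `mML(A, A) = −∞` when `S` is nonempty). -/
noncomputable def mML {Ω : Type*} [Fintype Ω] [DecidableEq (Ω → ℝ)]
    (P : Set (Ω → ℝ)) (S A : Finset (Ω → ℝ)) : EReal :=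
  S.inf fun a => (A \ S).sup fun a' => ((upperExp P (a' - a) : ℝ) : EReal)

/-- `MmL(S, A) = max_{a' ∈ A ∖ S} min_{a ∈ S} Ē(a' − a)`, valued in `EReal` so that the
maximum over the empty set is `−∞` (hence `MmL(A, A) = −∞`). -/
noncomputable def MmL {Ω : Type*} [Fintype Ω] [DecidableEq (Ω → ℝ)]
    (P : Set (Ω → ℝ)) (S A : Finset (Ω → ℝ)) : EReal :=
  (A \ S).sup fun a' => S.inf fun a => ((upperExp P (a' - a) : ℝ) : EReal)

/-!
If `S` already contains a maximal act there is nothing to do. Otherwise pick `a ∈ S`; since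
dominance is a strict order on the finite set `A`, some maximal `m ∈ A` dominates `a`, and
`m ∉ S`. Swapping `a` for `m` cannot increase `MmL`: by subadditivity of `Ē`, replacing `a` by
its dominator `m` lowers every `Ē(x - a)` and raises every `Ē(a - x)`, so each act outside
the new set (including `a` itself) is no better against it than some act outside `S` was
against `S`.
-/

theorem Finset.inf_insert_erase_le {α β : Type*} [DecidableEq α] [SemilatticeInf β] [OrderTop β]
    {s : Finset α} {a b : α} {f g : α → β} (hb : f b ≤ g a) (h : ∀ x ∈ s, x ≠ a → f x ≤ g x) :
    (insert b (s.erase a)).inf f ≤ s.inf g := by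
  refine Finset.le_inf fun x hx => ?_
  by_cases hxa : x = a
  · subst hxa
    exact (inf_le (mem_insert_self b _)).trans hb
  · exact (inf_le (mem_insert_of_mem (mem_erase.2 ⟨hxa, hx⟩))).trans (h x hx hxa)

section UpperExpectation

variable {Ω : Type*} [Fintype Ω] {P : Set (Ω → ℝ)}

theorem le_upperExp (hc : IsCompact P) {p : Ω → ℝ} (hp : p ∈ P) (f : Ω → ℝ) :
    ∑ ω, p ω * f ω ≤ upperExp P f := by
  have hcont : Continuous fun p : Ω → ℝ => ∑ ω, p ω * f ω := by fun_prop
  exact le_csSup (hc.image hcont).bddAbove ⟨p, hp, rfl⟩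

theorem upperExp_zero (hne : P.Nonempty) : upperExp P 0 = 0 := by
  simp [upperExp, hne.image_const]

theorem upperExp_add_le (hne : P.Nonempty) (hc : IsCompact P) (f g : Ω → ℝ) :
    upperExp P (f + g) ≤ upperExp P f + upperExp P g := by
  refine csSup_le (hne.image _) ?_
  rintro _ ⟨p, hp, rfl⟩
  simp only [Pi.add_apply, mul_add, sum_add_distrib]
  exact add_le_add (le_upperExp hc hp f) (le_upperExp hc hp g)

theorem upperExp_sub_le (hne : P.Nonempty) (hc : IsCompact P) (a b c : Ω → ℝ) :
    upperExp P (a - c) ≤ upperExp P (a - b) + upperExp P (b - c) := by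
  simpa only [sub_add_sub_cancel] using upperExp_add_le hne hc (a - b) (b - c)

theorem dominates_irrefl (hne : P.Nonempty) (a : Ω → ℝ) : ¬ dominates P a a := by
  simp [dominates, upperExp_zero hne]

namespace dominates

variable (hne : P.Nonempty) (hc : IsCompact P) {a b c : Ω → ℝ}
include hne hc

theorem trans (hab : dominates P a b) (hbc : dominates P b c) : dominates P a c := by
  unfold dominates at *
  linarith [upperExp_sub_le hne hc c b a]

theorem upperExp_sub_left_le (h : dominates P a b) (x : Ω → ℝ) :
    upperExp P (x - a) ≤ upperExp P (x - b) := by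
  unfold dominates at h
  linarith [upperExp_sub_le hne hc x b a]

theorem upperExp_sub_right_le (h : dominates P a b) (x : Ω → ℝ) :
    upperExp P (b - x) ≤ upperExp P (a - x) := by
  unfold dominates at h
  linarith [upperExp_sub_le hne hc b a x]

theorem upperExp_sub_le_upperExp_sub (h : dominates P a b) :
    upperExp P (b - a) ≤ upperExp P (a - b) := by
  have h₁ := h.upperExp_sub_left_le hne hc a
  have h₂ := h.upperExp_sub_right_le hne hc a
  rw [sub_self, upperExp_zero hne] at h₁ h₂
  linarith

end dominates

theorem exists_maximalIn_dominates (hne : P.Nonempty) (hc : IsCompact P)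
    {A : Finset (Ω → ℝ)} {a : Ω → ℝ} (ha : a ∈ A) (hna : ¬ maximalIn P A a) :
    ∃ m, maximalIn P A m ∧ dominates P m a := by
  have : IsStrictOrder (Ω → ℝ) (dominates P) :=
    { irrefl := dominates_irrefl hne
      trans := fun _ _ _ => dominates.trans hne hc }
  revert hna
  refine (A.finite_toSet.wellFoundedOn (r := dominates P)).induction (mem_coe.2 ha)
    (P := fun y => ¬ maximalIn P A y → ∃ m, maximalIn P A m ∧ dominates P m y) ?_
  intro y hy ih hny
  obtain ⟨z, hz, hzy⟩ : ∃ z ∈ A, dominates P z y := by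
    simpa [maximalIn, mem_coe.1 hy] using hny
  by_cases hmz : maximalIn P A z
  · exact ⟨z, hmz, hzy⟩
  · obtain ⟨m, hm, hmz⟩ := ih z (mem_coe.2 hz) hzy hmz
    exact ⟨m, hm, hmz.trans hne hc hzy⟩

variable [DecidableEq (Ω → ℝ)]

theorem MmL_insert_erase_le_of_dominates (hne : P.Nonempty) (hc : IsCompact P)
    {S A : Finset (Ω → ℝ)} {a m : Ω → ℝ} (hm : m ∈ A) (hmS : m ∉ S) (hma : dominates P m a) :
    MmL P (insert m (S.erase a)) A ≤ MmL P S A := by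
  refine Finset.sup_le fun x hx => ?_
  obtain ⟨hxA, hxT⟩ := mem_sdiff.1 hx
  by_cases hxa : x = a
  · subst hxa
    calc _ ≤ S.inf fun b => ((upperExp P (m - b) : ℝ) : EReal) :=
          inf_insert_erase_le (by exact_mod_cast hma.upperExp_sub_le_upperExp_sub hne hc)
            fun b _ _ => by exact_mod_cast hma.upperExp_sub_right_le hne hc b
      _ ≤ MmL P S A :=
          le_sup (f := fun x => S.inf fun b => ((upperExp P (x - b) : ℝ) : EReal))
            (mem_sdiff.2 ⟨hm, hmS⟩)
  · have hxS : x ∉ S := fun h => hxT (mem_insert_of_mem (mem_erase.2 ⟨hxa, h⟩))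
    calc _ ≤ S.inf fun b => ((upperExp P (x - b) : ℝ) : EReal) :=
          inf_insert_erase_le (by exact_mod_cast hma.upperExp_sub_left_le hne hc x)
            fun _ _ _ => le_rfl
      _ ≤ MmL P S A :=
          le_sup (f := fun x => S.inf fun b => ((upperExp P (x - b) : ℝ) : EReal))
            (mem_sdiff.2 ⟨hxA, hxS⟩)

end UpperExpectation

theorem stmt11_general {Ω : Type*} [Fintype Ω] [DecidableEq (Ω → ℝ)]
    (P : Set (Ω → ℝ)) (hP : IsCredal P)
    (A : Finset (Ω → ℝ)) (k : ℕ)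
    (S : Finset (Ω → ℝ)) (hS : S.Nonempty) (hSA : S ⊆ A) (hScard : S.card = k) :
    ∃ T : Finset (Ω → ℝ), T ⊆ A ∧ T.card = k ∧ (∃ a ∈ T, maximalIn P A a) ∧
      MmL P T A ≤ MmL P S A := by
  obtain ⟨hne, hc, -⟩ := hP
  by_cases hmax : ∃ a ∈ S, maximalIn P A a
  · exact ⟨S, hSA, hScard, hmax, le_rfl⟩
  push Not at hmax
  obtain ⟨a, ha⟩ := hS
  obtain ⟨m, hm, hma⟩ := exists_maximalIn_dominates hne hc (hSA ha) (hmax a ha)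
  have hmS : m ∉ S := fun h => hmax m h hm
  refine ⟨insert m (S.erase a), insert_subset hm.1 ((erase_subset a S).trans hSA), ?_,
    ⟨m, mem_insert_self _ _, hm⟩, MmL_insert_erase_le_of_dominates hne hc hm.1 hmS hma⟩
  rw [card_insert_of_notMem (fun h => hmS (mem_of_mem_erase h)), card_erase_add_one ha, hScard]

theorem stmt11 {Ω : Type*} [Fintype Ω] [Nonempty Ω] [DecidableEq (Ω → ℝ)]
    (P : Set (Ω → ℝ)) (hP : IsCredal P)
    (A : Finset (Ω → ℝ)) (hA : A.Nonempty) (k : ℕ)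
    (S : Finset (Ω → ℝ)) (hS : S.Nonempty) (hSA : S ⊆ A) (hScard : S.card = k)
    (hSne : S ≠ A) :
    ∃ T : Finset (Ω → ℝ), T ⊆ A ∧ T.card = k ∧ (∃ a ∈ T, maximalIn P A a) ∧
      MmL P T A ≤ MmL P S A :=
  stmt11_general P hP A k S hS hSA hScard
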